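/- arXiv:2503.01626 — 2 statements merged into one kernel-verified Lean document; each statement's English description precedes it below -/
import Mathlib

section
/- Let M be a subset of Euclidean n-space contained in the bounding voxel V₀, and let d ≥ 0 be a real number. Then the d-dimensional Hausdorff measure of M is bounded by the limit inferior of the d-dimensional volumes of the subdivision approximations: μH^d(M) ≤ liminf_{t → ∞} (card Q_t(M)) · (2^{-t} · ‖b − a‖)^d, where card Q_t(M) is the (finite) number of retained level-t dyadic sub-voxels. -/
/-!
The closed retained sub-voxels of level `t` cover `M` and each has diameter at most
`2^{-t}‖b - a‖`, which tends to `0`. They are therefore admissible covers in the definition of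
the Hausdorff measure, and the `d`-th powers of their diameters sum to at most
`card Q_t(M) · (2^{-t}‖b - a‖)^d`.
-/

open Set Metric Filter MeasureTheory ENNReal

noncomputable section

variable {n : ℕ}

/-- The bounding voxel `V₀ = {x | ∀ i, a i ≤ x i ∧ x i < b i}`. -/
def boundingVoxel (a b : EuclideanSpace ℝ (Fin n)) : Set (EuclideanSpace ℝ (Fin n)) :=
  {x | ∀ i, a i ≤ x i ∧ x i < b i}

/-- The level-`t` dyadic sub-voxel `D_t(k)`. -/
def subVoxel (a b : EuclideanSpace ℝ (Fin n)) (t : ℕ) (k : Fin n → ℕ) :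
    Set (EuclideanSpace ℝ (Fin n)) :=
  {x | ∀ i, a i + (k i : ℝ) * (b i - a i) / 2 ^ t ≤ x i ∧
            x i < a i + ((k i : ℝ) + 1) * (b i - a i) / 2 ^ t}

/-- The retained indices `Q_t(M)`: admissible `k` whose closed sub-voxel meets `M`. -/
def retained (a b : EuclideanSpace ℝ (Fin n)) (t : ℕ) (M : Set (EuclideanSpace ℝ (Fin n))) :
    Set (Fin n → ℕ) :=
  {k | (∀ i, k i < 2 ^ t) ∧ (closure (subVoxel a b t k) ∩ M).Nonempty}

/-- The level-`t` approximation `C_t(M)`: union of the closures of retained sub-voxels. -/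
def approx (a b : EuclideanSpace ℝ (Fin n)) (t : ℕ) (M : Set (EuclideanSpace ℝ (Fin n))) :
    Set (EuclideanSpace ℝ (Fin n)) :=
  ⋃ k ∈ retained a b t M, closure (subVoxel a b t k)

open Topology

theorem finite_retained (a b : EuclideanSpace ℝ (Fin n)) (t : ℕ)
    (M : Set (EuclideanSpace ℝ (Fin n))) : (retained a b t M).Finite :=
  (Set.Finite.pi fun _ => Set.finite_Iio (2 ^ t)).subset fun _ hk i _ => hk.1 i

theorem EuclideanSpace.dist_le_norm_of_forall_dist_apply_le {ι : Type*} [Fintype ι]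
    {x y c : EuclideanSpace ℝ ι} (h : ∀ i, dist (x i) (y i) ≤ c i) : dist x y ≤ ‖c‖ := by
  rw [EuclideanSpace.dist_eq, EuclideanSpace.norm_eq]
  gcongr with i
  exact (h i).trans (le_abs_self _)

theorem dist_apply_le_of_mem_subVoxel {a b x y : EuclideanSpace ℝ (Fin n)} {t : ℕ}
    {k : Fin n → ℕ} (hx : x ∈ subVoxel a b t k) (hy : y ∈ subVoxel a b t k) (i : Fin n) :
    dist (x i) (y i) ≤ (b i - a i) / 2 ^ t := by
  have hwidth : ((k i : ℝ) + 1) * (b i - a i) / 2 ^ t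
      = (k i : ℝ) * (b i - a i) / 2 ^ t + (b i - a i) / 2 ^ t := by ring
  rw [Real.dist_eq, abs_le]
  constructor <;> linarith [hx i, hy i]

theorem ediam_closure_subVoxel_le (a b : EuclideanSpace ℝ (Fin n)) (t : ℕ) (k : Fin n → ℕ) :
    ediam (closure (subVoxel a b t k)) ≤
      ENNReal.ofReal ((2 : ℝ) ^ (-(t : ℤ)) * ‖b - a‖) := by
  rw [Metric.ediam_closure]
  refine Metric.ediam_le fun x hx y hy => ?_
  rw [edist_dist]
  refine ENNReal.ofReal_le_ofReal ?_
  calc dist x y ≤ ‖(2 : ℝ) ^ (-(t : ℤ)) • (b - a)‖ :=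
        EuclideanSpace.dist_le_norm_of_forall_dist_apply_le fun i => by
          simpa [zpow_neg, div_eq_inv_mul] using dist_apply_le_of_mem_subVoxel hx hy i
    _ = (2 : ℝ) ^ (-(t : ℤ)) * ‖b - a‖ := by
        rw [norm_smul, Real.norm_of_nonneg (by positivity)]

theorem exists_mem_dyadic_subinterval {a b x : ℝ} (hax : a ≤ x) (hxb : x < b) (t : ℕ) :
    ∃ k : ℕ, k < 2 ^ t ∧ a + k * (b - a) / 2 ^ t ≤ x ∧ x < a + (k + 1) * (b - a) / 2 ^ t := by
  have hw : 0 < (b - a) / 2 ^ t := by have := hax.trans_lt hxb; positivity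
  have hq : 0 ≤ (x - a) / ((b - a) / 2 ^ t) := div_nonneg (sub_nonneg.2 hax) hw.le
  refine ⟨⌊(x - a) / ((b - a) / 2 ^ t)⌋₊, ?_, ?_, ?_⟩
  · rw [Nat.floor_lt hq, div_lt_iff₀ hw]
    push_cast
    field_simp
    linarith
  · have := Nat.floor_le hq
    rw [le_div_iff₀ hw] at this
    rw [mul_div_assoc]
    linarith
  · have := Nat.lt_floor_add_one ((x - a) / ((b - a) / 2 ^ t))
    rw [div_lt_iff₀ hw] at this
    rw [mul_div_assoc]
    linarith

theorem exists_mem_subVoxel {a b x : EuclideanSpace ℝ (Fin n)} (hx : x ∈ boundingVoxel a b)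
    (t : ℕ) : ∃ k : Fin n → ℕ, (∀ i, k i < 2 ^ t) ∧ x ∈ subVoxel a b t k := by
  choose k hk hmem using fun i => exists_mem_dyadic_subinterval (hx i).1 (hx i).2 t
  exact ⟨k, hk, fun i => hmem i⟩

theorem subset_approx {a b : EuclideanSpace ℝ (Fin n)} {M : Set (EuclideanSpace ℝ (Fin n))}
    (hM : M ⊆ boundingVoxel a b) (t : ℕ) : M ⊆ approx a b t M := fun x hx => by
  obtain ⟨k, hk, hxk⟩ := exists_mem_subVoxel (hM hx) t
  exact mem_biUnion ⟨hk, x, subset_closure hxk, hx⟩ (subset_closure hxk)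

theorem tendsto_ofReal_two_zpow_neg_mul (c : ℝ) :
    Tendsto (fun t : ℕ => ENNReal.ofReal ((2 : ℝ) ^ (-(t : ℤ)) * c)) atTop (𝓝 0) := by
  have := (tendsto_pow_atTop_nhds_zero_of_lt_one (r := (2 : ℝ)⁻¹) (by norm_num)
    (by norm_num)).mul_const c
  simpa [zpow_neg, inv_pow] using ENNReal.tendsto_ofReal this

theorem hausdorffMeasure_le_liminf_general
    (n : ℕ) (a b : EuclideanSpace ℝ (Fin n))
    (M : Set (EuclideanSpace ℝ (Fin n))) (hM : M ⊆ boundingVoxel a b)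
    (d : ℝ) (hd : 0 ≤ d) :
    μH[d] M ≤ Filter.liminf (fun t : ℕ =>
      ((retained a b t M).ncard : ℝ≥0∞) *
        (ENNReal.ofReal ((2 : ℝ) ^ (-(t : ℤ)) * ‖b - a‖)) ^ d) Filter.atTop := by
  set r : ℕ → ℝ≥0∞ := fun t => ENNReal.ofReal ((2 : ℝ) ^ (-(t : ℤ)) * ‖b - a‖)
  have hcover := Measure.hausdorffMeasure_le_liminf_tsum d M r
    (tendsto_ofReal_two_zpow_neg_mul ‖b - a‖)
    (fun t (k : retained a b t M) => closure (subVoxel a b t k))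
    (.of_forall fun t k => ediam_closure_subVoxel_le a b t k)
    (.of_forall fun t => by simpa only [approx, biUnion_eq_iUnion] using subset_approx hM t)
  refine hcover.trans (liminf_le_liminf (.of_forall fun t => ?_))
  calc ∑' k : retained a b t M, ediam (closure (subVoxel a b t k)) ^ d
      ≤ ∑' _ : retained a b t M, r t ^ d :=
        ENNReal.tsum_le_tsum fun k => ENNReal.rpow_le_rpow (ediam_closure_subVoxel_le a b t k) hd
    _ = (retained a b t M).ncard * r t ^ d := by
        rw [ENNReal.tsum_set_const, ← (finite_retained a b t M).cast_ncard_eq]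
        rfl

/-- the `d`-dimensional Hausdorff measure of `M` is bounded by the liminf of
the `d`-dimensional volumes `(card Q_t(M)) · (2^{-t}·‖b - a‖)^d` of the approximations. -/
theorem hausdorffMeasure_le_liminf
    (n : ℕ) (hn : 1 ≤ n) (a b : EuclideanSpace ℝ (Fin n)) (hab : ∀ i, a i < b i)
    (M : Set (EuclideanSpace ℝ (Fin n))) (hM : M ⊆ boundingVoxel a b)
    (d : ℝ) (hd : 0 ≤ d) :
    μH[d] M ≤ Filter.liminf (fun t : ℕ =>
      ((retained a b t M).ncard : ℝ≥0∞) *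
        (ENNReal.ofReal ((2 : ℝ) ^ (-(t : ℤ)) * ‖b - a‖)) ^ d) Filter.atTop :=
  hausdorffMeasure_le_liminf_general n a b M hM d hd
end
end

section
/- If M is a closed subset of Euclidean n-space contained in the bounding voxel V₀ and M has Lebesgue measure zero, then the Lebesgue measures of the subdivision approximations tend to zero: the sequence t ↦ volume(C_t(M)) tends to 0 as t → ∞. -/
open Set Metric Filter MeasureTheory ENNReal

noncomputable section

variable {n : ℕ}

/-!
Every retained closed sub-voxel of level `t` has diameter at most `dist a b / 2 ^ t` and meets `M`,
so `C_t(M)` lies in the closed `dist a b / 2 ^ t`-thickening of `M`. Since `M` is compact, the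
measures of its closed `r`-thickenings tend to `volume M = 0` as `r → 0`.
-/

open Topology

namespace EuclideanSpace

theorem norm_le_norm_of_forall_abs_le {ι : Type*} [Fintype ι] {v w : EuclideanSpace ℝ ι}
    (h : ∀ i, |v i| ≤ |w i|) : ‖v‖ ≤ ‖w‖ := by
  simp only [EuclideanSpace.norm_eq, Real.norm_eq_abs]
  exact Real.sqrt_le_sqrt (Finset.sum_le_sum fun i _ => pow_le_pow_left₀ (abs_nonneg _) (h i) 2)

end EuclideanSpace

section Subdivision

variable (a b : EuclideanSpace ℝ (Fin n))

theorem dist_le_dist_of_mem_boundingVoxel {x : EuclideanSpace ℝ (Fin n)}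
    (hx : x ∈ boundingVoxel a b) : dist x a ≤ dist b a := by
  rw [dist_eq_norm, dist_eq_norm]
  refine EuclideanSpace.norm_le_norm_of_forall_abs_le fun i => ?_
  simp only [PiLp.sub_apply]
  rw [abs_of_nonneg (sub_nonneg.2 (hx i).1), abs_of_nonneg (by linarith [(hx i).1, (hx i).2])]
  linarith [(hx i).2]

theorem isBounded_boundingVoxel : Bornology.IsBounded (boundingVoxel a b) :=
  isBounded_closedBall.subset fun _ hx =>
    mem_closedBall.2 (dist_le_dist_of_mem_boundingVoxel a b hx)

theorem closure_subVoxel_subset (t : ℕ) (k : Fin n → ℕ) :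
    closure (subVoxel a b t k) ⊆ {x | ∀ i, a i + (k i : ℝ) * (b i - a i) / 2 ^ t ≤ x i ∧
      x i ≤ a i + ((k i : ℝ) + 1) * (b i - a i) / 2 ^ t} := by
  refine closure_minimal (fun x hx i => ⟨(hx i).1, (hx i).2.le⟩) ?_
  simp only [ofPred_forall, ofPred_and]
  exact isClosed_iInter fun i =>
    (isClosed_le continuous_const (EuclideanSpace.proj i).continuous).inter
      (isClosed_le (EuclideanSpace.proj i).continuous continuous_const)

theorem dist_le_of_mem_closure_subVoxel {t : ℕ} {k : Fin n → ℕ}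
    {x y : EuclideanSpace ℝ (Fin n)}
    (hx : x ∈ closure (subVoxel a b t k)) (hy : y ∈ closure (subVoxel a b t k)) :
    dist x y ≤ dist a b / 2 ^ t := by
  have hpow : (0 : ℝ) < 2 ^ t := by positivity
  calc dist x y = ‖x - y‖ := dist_eq_norm x y
    _ ≤ ‖((2 : ℝ) ^ t)⁻¹ • (a - b)‖ := by
        refine EuclideanSpace.norm_le_norm_of_forall_abs_le fun i => ?_
        have hxi := closure_subVoxel_subset a b t k hx i
        have hyi := closure_subVoxel_subset a b t k hy i
        have hside : a i + ((k i : ℝ) + 1) * (b i - a i) / 2 ^ t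
            - (a i + (k i : ℝ) * (b i - a i) / 2 ^ t) = (b i - a i) / 2 ^ t := by
          field_simp
          ring
        simp only [PiLp.sub_apply, PiLp.smul_apply, smul_eq_mul, abs_mul, abs_inv,
          abs_of_pos hpow, abs_sub_comm (a i)]
        rw [inv_mul_eq_div, abs_sub_le_iff]
        have hside_le : (b i - a i) / 2 ^ t ≤ |b i - a i| / 2 ^ t := by
          gcongr
          exact le_abs_self _
        constructor <;> linarith
    _ = dist a b / 2 ^ t := by
        rw [norm_smul, norm_inv, Real.norm_of_nonneg hpow.le, ← dist_eq_norm, inv_mul_eq_div]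

theorem approx_subset_cthickening (t : ℕ) (M : Set (EuclideanSpace ℝ (Fin n))) :
    approx a b t M ⊆ cthickening (dist a b / 2 ^ t) M := by
  intro x hx
  obtain ⟨k, ⟨-, y, hyk, hyM⟩, hxk⟩ := mem_iUnion₂.1 hx
  exact mem_cthickening_of_dist_le x y _ M hyM (dist_le_of_mem_closure_subVoxel a b hxk hyk)

end Subdivision

theorem tendsto_volume_approx_general
    (n : ℕ) (a b : EuclideanSpace ℝ (Fin n))
    (M : Set (EuclideanSpace ℝ (Fin n))) (hMc : IsClosed M)
    (hM : M ⊆ boundingVoxel a b) (hvol : volume M = 0) :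
    Filter.Tendsto (fun t : ℕ => volume (approx a b t M)) Filter.atTop (nhds 0) := by
  have hMcompact : IsCompact M :=
    isCompact_of_isClosed_isBounded hMc ((isBounded_boundingVoxel a b).subset hM)
  have hmesh : Tendsto (fun t : ℕ => dist a b / 2 ^ t) atTop (𝓝 0) := by
    have hhalf : Tendsto (fun t : ℕ => ((2 : ℝ)⁻¹) ^ t) atTop (𝓝 0) :=
      tendsto_pow_atTop_nhds_zero_of_lt_one (by norm_num) (by norm_num)
    simpa [div_eq_mul_inv] using hhalf.const_mul (dist a b)
  have hthick := (tendsto_measure_cthickening_of_isCompact (μ := volume) hMcompact).comp hmesh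
  rw [hvol] at hthick
  exact tendsto_of_tendsto_of_tendsto_of_le_of_le tendsto_const_nhds hthick
    (fun _ => zero_le) (fun t => measure_mono (approx_subset_cthickening a b t M))

/-- for closed `M ⊆ V₀` of Lebesgue measure zero, the volumes of the
approximations `C_t(M)` tend to zero. -/
theorem tendsto_volume_approx
    (n : ℕ) (hn : 1 ≤ n) (a b : EuclideanSpace ℝ (Fin n)) (hab : ∀ i, a i < b i)
    (M : Set (EuclideanSpace ℝ (Fin n))) (hMc : IsClosed M)
    (hM : M ⊆ boundingVoxel a b) (hvol : volume M = 0) :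
    Filter.Tendsto (fun t : ℕ => volume (approx a b t M)) Filter.atTop (nhds 0) :=
  tendsto_volume_approx_general n a b M hMc hM hvol
end
end
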